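/- arXiv:2406.06557 — 5 statements merged into one kernel-verified Lean document; each statement's English description precedes it below -/
import Mathlib

section
/- Let p ≥ 3 be prime, q = p^t with t ≥ 1, s ≥ 1, and a ∈ ℤ. Then the product of all integers j with a ≤ j ≤ a + p^s - 1 that are coprime to q is congruent to -1 modulo p^s. -/
/-!
Reducing modulo `p ^ s`, the integers of any window of length `p ^ s` run exactly once through
the residues, and those prime to `p` through the units of `ZMod (p ^ s)`. So the product is the
product of all units, which is `-1` as in Wilson's theorem: pairing each unit with its inverse
leaves only the square roots of `1`, and for odd `p` these are `±1`, because `x - 1` and `x + 1`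
cannot both be divisible by `p`.
-/

open Finset

theorem prod_univ_units_id_eq_neg_one_of_mul_self_eq_one {R : Type*} [CommRing R] [Fintype Rˣ]
    (h : ∀ x : R, x * x = 1 → x = 1 ∨ x = -1) : ∏ u : Rˣ, u = -1 := by
  classical
  have hinv (u : Rˣ) (hu : u⁻¹ = u) : u = 1 ∨ u = -1 := by
    have huu : (u : R) * u = 1 := by
      rw [← Units.val_mul, inv_eq_iff_mul_eq_one.1 hu, Units.val_one]
    exact (h u huu).imp Units.ext Units.ext
  have hpairs : ∏ u ∈ univ.erase (-1 : Rˣ), u = 1 :=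
    prod_involution (fun u _ => u⁻¹) (fun u _ => mul_inv_cancel u)
      (fun u hu hne hfix => (mem_erase.1 hu).1 ((hinv u hfix).resolve_left hne))
      (fun u hu => mem_erase.2 ⟨fun h => (mem_erase.1 hu).1 (by rw [← inv_inv u, h, inv_neg,
        inv_one]), mem_univ _⟩)
      (fun u _ => inv_inv u)
  rw [← insert_erase (mem_univ (-1 : Rˣ)), prod_insert (notMem_erase _ _), hpairs, mul_one]

theorem prod_ite_isUnit_eq_prod_units {M : Type*} [CommMonoid M] [Fintype M] [Fintype Mˣ]
    [DecidablePred (IsUnit : M → Prop)] :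
    ∏ x : M, (if IsUnit x then x else 1) = ∏ u : Mˣ, (u : M) := by
  rw [← prod_filter]
  refine (prod_nbij Units.val (fun u _ => mem_filter.2 ⟨mem_univ _, u.isUnit⟩)
    (fun u _ v _ => Units.val_injective.eq_iff.1) (fun x hx => ?_) (fun _ _ => rfl)).symm
  exact ⟨(mem_filter.1 hx).2.unit, mem_univ _, IsUnit.unit_spec _⟩

namespace ZMod

theorem prod_Ico_intCast {N : ℕ} [NeZero N] {M : Type*} [CommMonoid M] (f : ZMod N → M) (a : ℤ) :
    ∏ j ∈ Ico a (a + N), f j = ∏ x : ZMod N, f x := by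
  have hN : (0 : ℤ) < N := by exact_mod_cast Nat.pos_of_neZero N
  refine prod_nbij (fun j : ℤ => (j : ZMod N)) (fun _ _ => mem_univ _) ?_ ?_ (fun _ _ => rfl)
  · intro i hi j hj hij
    rw [coe_Ico, Set.mem_Ico] at hi hj
    have := Int.eq_zero_of_abs_lt_dvd ((intCast_eq_intCast_iff_dvd_sub i j N).1 hij)
      (abs_sub_lt_iff.2 ⟨by omega, by omega⟩)
    omega
  · intro x _
    refine ⟨toIcoMod hN a x.val, by simpa using toIcoMod_mem_Ico hN a (x.val : ℤ), ?_⟩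
    simp [← self_sub_toIcoDiv_zsmul]

theorem isUnit_intCast_iff_not_dvd_pow {p d : ℕ} (hp : p.Prime) (hd : 0 < d) {j : ℤ} :
    IsUnit (j : ZMod (p ^ d)) ↔ ¬ (p : ℤ) ∣ j := by
  rw [Int.natCast_dvd, ← isUnit_natCast_iff_not_dvd_pow hp hd]
  rcases Int.natAbs_eq j with h | h <;> rw [h] <;> simp

theorem eq_one_or_eq_neg_one_of_mul_self_eq_one {p s : ℕ} (hp : p.Prime) (hp2 : p ≠ 2)
    (hs : 0 < s) {x : ZMod (p ^ s)} (hx : x * x = 1) : x = 1 ∨ x = -1 := by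
  obtain ⟨n, rfl⟩ := intCast_surjective x
  have hzero : ((n : ZMod (p ^ s)) + 1) * (1 - n) = 0 := by linear_combination -hx
  have h2 : ¬ (p : ℤ) ∣ (n + 1) + (1 - n) := by
    rw [show n + 1 + (1 - n) = ((2 : ℕ) : ℤ) by ring, Int.natCast_dvd_natCast,
      Nat.prime_dvd_prime_iff_eq hp Nat.prime_two]
    exact hp2
  rcases not_and_or.1 (mt (fun h => dvd_add h.1 h.2) h2) with h | h
  · have hu := (isUnit_intCast_iff_not_dvd_pow hp hs).2 h
    push_cast at hu
    left
    linear_combination -(hu.mul_right_eq_zero.1 hzero)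
  · have hu := (isUnit_intCast_iff_not_dvd_pow hp hs).2 h
    push_cast at hu
    right
    linear_combination hu.mul_left_eq_zero.1 hzero

end ZMod

theorem Int.gcd_prime_pow_eq_one_iff {p t : ℕ} (hp : p.Prime) (ht : 0 < t) {j : ℤ} :
    Int.gcd ((p : ℤ) ^ t) j = 1 ↔ ¬ (p : ℤ) ∣ j := by
  rw [Int.gcd, Int.natAbs_pow, Int.natAbs_natCast, ← Nat.coprime_iff_gcd_eq_one,
    Nat.coprime_pow_left_iff ht, hp.coprime_iff_not_dvd, Int.natCast_dvd]

theorem wilson_cong_odd (p t s : ℕ) (hp : p.Prime) (hp3 : 3 ≤ p) (ht : 1 ≤ t)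
    (hs : 1 ≤ s) (a : ℤ) :
    (∏ j ∈ (Finset.Icc a (a + (p : ℤ) ^ s - 1)).filter
        (fun j => Int.gcd ((p : ℤ) ^ t) j = 1), j) ≡ -1 [ZMOD (p : ℤ) ^ s] := by
  have : NeZero (p ^ s) := ⟨pow_ne_zero _ hp.ne_zero⟩
  have hwindow : Icc a (a + (p : ℤ) ^ s - 1) = Ico a (a + ((p ^ s : ℕ) : ℤ)) := by
    rw [← Ico_add_one_right_eq_Icc]; push_cast; ring_nf
  have hunit (j : ℤ) : Int.gcd ((p : ℤ) ^ t) j = 1 ↔ IsUnit (j : ZMod (p ^ s)) := by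
    rw [Int.gcd_prime_pow_eq_one_iff hp ht, ZMod.isUnit_intCast_iff_not_dvd_pow hp hs]
  rw [show (p : ℤ) ^ s = ((p ^ s : ℕ) : ℤ) by push_cast; rfl, ← ZMod.intCast_eq_intCast_iff]
  calc ((∏ j ∈ (Icc a (a + (p : ℤ) ^ s - 1)).filter
        (fun j => Int.gcd ((p : ℤ) ^ t) j = 1), j : ℤ) : ZMod (p ^ s))
      = ∏ j ∈ Ico a (a + ((p ^ s : ℕ) : ℤ)),
          if IsUnit (j : ZMod (p ^ s)) then (j : ZMod (p ^ s)) else 1 := by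
        rw [Int.cast_prod, prod_filter, hwindow]
        exact prod_congr rfl fun j _ => if_congr (hunit j) rfl rfl
    _ = ∏ u : (ZMod (p ^ s))ˣ, (u : ZMod (p ^ s)) := by
        rw [ZMod.prod_Ico_intCast (fun x => if IsUnit x then x else 1),
          prod_ite_isUnit_eq_prod_units]
    _ = ((-1 : ℤ) : ZMod (p ^ s)) := by
        rw [← Units.coe_prod, prod_univ_units_id_eq_neg_one_of_mul_self_eq_one
          (fun x => ZMod.eq_one_or_eq_neg_one_of_mul_self_eq_one hp (by omega) hs)]
        simp
end

section
/- Let p ≥ 3 be prime, q = p^t with t ≥ 1, n ∈ ℕ, and m, s ≥ 1. Then the product of all integers j coprime to q with n+1 ≤ j ≤ n+m·p^s is congruent to (-1)^m modulo p^s. -/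
/-!
Modulo `p ^ s`, the integers coprime to `p` in a window of `p ^ s` consecutive integers run exactly
once through the units of `ZMod (p ^ s)`, so the product is the `m`-th power of the product of all
units. For odd `p` this unit group is cyclic, hence `-1` is its only element of order two; pairing
every other unit with its inverse shows that the product of all units is `-1`
(Gauss's generalization of Wilson's theorem).
-/

open Finset

theorem prod_univ_eq_of_sq_eq_one_iff {G : Type*} [CommGroup G] [Fintype G] {u : G}
    (h : ∀ x : G, x ^ 2 = 1 ↔ x = 1 ∨ x = u) : ∏ x : G, x = u := by
  classical
  have hu : u⁻¹ = u := inv_eq_of_mul_eq_one_left (by simpa [sq] using (h u).2 (.inr rfl))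
  have : ∏ x ∈ univ.erase u, x = 1 :=
    prod_involution (fun x _ => x⁻¹) (by simp)
      (fun x hx hx1 hinv => (mem_erase.1 hx).1 <|
        ((h x).1 (by rw [sq]; nth_rw 1 [← hinv]; exact inv_mul_cancel x)).resolve_left hx1)
      (fun x hx => mem_erase.2 ⟨fun hxu => (mem_erase.1 hx).1 (by rw [← inv_inv x, hxu, hu]),
        mem_univ _⟩)
      (by simp)
  rw [← insert_erase (mem_univ u), prod_insert (notMem_erase _ _), this, mul_one]

theorem prod_univ_units_id_eq_neg_one_of_isCyclic {R : Type*} [CommRing R] [Fintype Rˣ]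
    [IsCyclic Rˣ] (h : (-1 : R) ≠ 1) : ∏ x : Rˣ, x = -1 := by
  classical
  have hne : (-1 : Rˣ) ≠ 1 := fun h' => h (by simpa using congrArg Units.val h')
  refine prod_univ_eq_of_sq_eq_one_iff fun x => ⟨fun hx => ?_, ?_⟩
  · by_contra! hx'
    have hsub : ({1, -1, x} : Finset Rˣ) ⊆ ({a | a ^ 2 = 1} : Finset Rˣ) := by
      intro a ha
      simp only [mem_insert, mem_singleton] at ha
      rcases ha with rfl | rfl | rfl <;> simp [hx]
    have := (card_le_card hsub).trans (IsCyclic.card_pow_eq_one_le two_pos)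
    rw [card_insert_of_notMem (by simp [hne.symm, hx'.1.symm]),
      card_insert_of_notMem (by simp [hx'.2.symm]), card_singleton] at this
    omega
  · rintro (rfl | rfl) <;> simp

theorem ZMod.prod_Ioc_coprime_eq_prod_units (N n : ℕ) [NeZero N] :
    ∏ j ∈ Ioc n (n + N) with j.Coprime N, (j : ZMod N) = ∏ x : (ZMod N)ˣ, (x : ZMod N) := by
  -- the inverse sends `x` to its representative in `(n, n + N]`
  refine prod_bij' (fun j hj => ZMod.unitOfCoprime j (mem_filter.1 hj).2)
    (fun x _ => n + 1 + ((x : ZMod N) - ((n + 1 : ℕ) : ZMod N)).val) (by simp) ?_ ?_ ?_ (by simp)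
  · intro x _
    have hlt := ZMod.val_lt ((x : ZMod N) - ((n + 1 : ℕ) : ZMod N))
    have hcast : ((n + 1 + ((x : ZMod N) - ((n + 1 : ℕ) : ZMod N)).val : ℕ) : ZMod N) = x := by
      push_cast [ZMod.natCast_zmod_val]; ring
    refine mem_filter.2 ⟨mem_Ioc.2 ⟨by omega, by omega⟩, ?_⟩
    rw [← ZMod.isUnit_iff_coprime, hcast]
    exact x.isUnit
  · intro j hj
    obtain ⟨hj1, hj2⟩ := mem_Ioc.1 (mem_filter.1 hj).1
    rw [ZMod.coe_unitOfCoprime, ← Nat.cast_sub (by omega), ZMod.val_cast_of_lt (by omega)]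
    omega
  · intro x _
    ext
    push_cast [ZMod.coe_unitOfCoprime, ZMod.natCast_zmod_val]
    ring

theorem ZMod.prod_Ioc_coprime_eq_pow (N n m : ℕ) [NeZero N] :
    ∏ j ∈ Ioc n (n + m * N) with j.Coprime N, (j : ZMod N) =
      (∏ x : (ZMod N)ˣ, (x : ZMod N)) ^ m := by
  induction m with
  | zero => simp
  | succ m ih =>
    rw [prod_filter] at ih ⊢
    rw [← prod_Ioc_consecutive _ (by omega : n ≤ n + m * N) (by nlinarith : n + m * N ≤ _),
      ih, add_mul, one_mul, ← add_assoc, ← prod_filter, prod_Ioc_coprime_eq_prod_units, pow_succ]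

theorem qfact_quotient_cong_gen_general (p t s n m : ℕ) (hp : p.Prime) (hp3 : 3 ≤ p)
    (ht : 1 ≤ t) (hs : 1 ≤ s) :
    (∏ j ∈ (Finset.Icc (n + 1) (n + m * p ^ s)).filter
        (fun j => Nat.gcd (p ^ t) j = 1), (j : ℤ)) ≡ (-1) ^ m [ZMOD (p : ℤ) ^ s] := by
  have : IsCyclic (ZMod (p ^ s))ˣ := ZMod.isCyclic_units_of_prime_pow p hp (by omega) s
  have : NeZero (p ^ s) := ⟨pow_ne_zero s hp.ne_zero⟩
  have : Fact (2 < p ^ s) := ⟨hp3.trans (Nat.le_self_pow (by omega) p)⟩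
  have hfilter : (Icc (n + 1) (n + m * p ^ s)).filter (fun j => Nat.gcd (p ^ t) j = 1) =
      (Ioc n (n + m * p ^ s)).filter (fun j => j.Coprime (p ^ s)) := by
    rw [← Icc_add_one_left_eq_Ioc]
    refine filter_congr fun j _ => ?_
    rw [← Nat.Coprime, Nat.coprime_pow_left_iff (by omega), Nat.coprime_comm,
      Nat.coprime_pow_right_iff (by omega)]
  rw [hfilter, ← Int.natCast_pow, ← ZMod.intCast_eq_intCast_iff]
  push_cast
  rw [ZMod.prod_Ioc_coprime_eq_pow, ← Units.coe_prod,
    prod_univ_units_id_eq_neg_one_of_isCyclic ZMod.neg_one_ne_one, Units.val_neg, Units.val_one]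

theorem qfact_quotient_cong_gen (p t s n m : ℕ) (hp : p.Prime) (hp3 : 3 ≤ p)
    (ht : 1 ≤ t) (hs : 1 ≤ s) (hm : 1 ≤ m) :
    (∏ j ∈ (Finset.Icc (n + 1) (n + m * p ^ s)).filter
        (fun j => Nat.gcd (p ^ t) j = 1), (j : ℤ)) ≡ (-1) ^ m [ZMOD (p : ℤ) ^ s] :=
  qfact_quotient_cong_gen_general p t s n m hp hp3 ht hs
end

section
/- Let p ≥ 3 be prime, q = p^t with t ≥ 1, n ∈ ℕ, s ≥ 1. Then p^s divides (n+p^s)!_q + n!_q; equivalently |(n+p^s)!_q + n!_q|_p ≤ p^{-s}. -/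
/-- The `q`-adic factorial: product of all `j` with `1 ≤ j ≤ n` coprime to `q`. -/
def qfact (q n : ℕ) : ℕ :=
  ∏ j ∈ (Finset.Icc 1 n).filter (fun j => Nat.gcd q j = 1), j

/-! Modulo `p ^ s`, the factors of `(n + p ^ s)!_q` beyond `n!_q` run over `p ^ s` consecutive
integers, i.e. once over every residue class, and those coprime to `p` are exactly the units of
`ZMod (p ^ s)`. Their product is the product of all units, which is `-1` (Gauss's generalization
of Wilson's theorem): `ZMod (p ^ s)` is a local ring in which `2` is invertible, so `±1` are the
only square roots of `1`, and pairing every other unit with its inverse leaves `-1`. Hence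
`(n + p ^ s)!_q ≡ -n!_q`. -/

open Finset

namespace IsLocalRing

variable {R : Type*} [CommRing R] [IsLocalRing R]

theorem eq_one_or_eq_neg_one_of_sq_eq_one (h2 : IsUnit (2 : R)) {x : R} (hx : x ^ 2 = 1) :
    x = 1 ∨ x = -1 := by
  have hprod : (x + 1) * (x - 1) = 0 := by linear_combination hx
  have hsum : (x + 1) + (1 - x) = 2 := by ring
  rcases isUnit_or_isUnit_of_isUnit_add (hsum ▸ h2) with h | h
  · left
    exact sub_eq_zero.mp ((h.mul_right_eq_zero).mp hprod)
  · right
    have : (1 - x) * (x + 1) = 0 := by linear_combination -hprod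
    exact eq_neg_of_add_eq_zero_left ((h.mul_right_eq_zero).mp this)

theorem prod_univ_units_eq_neg_one [Fintype Rˣ] (h2 : IsUnit (2 : R)) :
    ∏ u : Rˣ, u = -1 := by
  classical
  have hinv : ∀ u : Rˣ, u⁻¹ = u → u = 1 ∨ u = -1 := fun u hu => by
    have hsq : (u : R) ^ 2 = 1 := by
      rw [sq, ← Units.val_mul, mul_eq_one_iff_inv_eq.mpr hu, Units.val_one]
    exact (eq_one_or_eq_neg_one_of_sq_eq_one h2 hsq).imp Units.ext Units.ext
  have hpaired : ∏ u ∈ univ.erase (-1 : Rˣ), u = 1 :=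
    prod_involution (fun u _ => u⁻¹) (by simp)
      (fun u hu hu1 h => (by simpa using hu : u ≠ -1) ((hinv u h).resolve_left hu1))
      (fun u hu => by simpa [inv_eq_iff_eq_inv] using hu) (by simp)
  rw [← insert_erase (mem_univ (-1 : Rˣ)), prod_insert (notMem_erase _ _), hpaired, mul_one]

theorem prod_ite_isUnit_eq_neg_one [Fintype R] [DecidablePred (IsUnit : R → Prop)]
    (h2 : IsUnit (2 : R)) : ∏ x : R, (if IsUnit x then x else 1) = -1 := by
  classical
  have hunits := congrArg Units.val (prod_univ_units_eq_neg_one h2)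
  rw [Units.coe_prod, Units.val_neg, Units.val_one] at hunits
  rw [← prod_filter, ← hunits]
  symm
  refine prod_nbij Units.val (by simp) (fun u _ v _ => Units.ext) (fun x hx => ?_) (by simp)
  obtain ⟨u, rfl⟩ := (mem_filter.mp hx).2
  exact ⟨u, by simp⟩

end IsLocalRing

namespace ZMod

theorem isLocalRing_prime_pow {p d : ℕ} (hp : p.Prime) (hd : 0 < d) :
    IsLocalRing (ZMod (p ^ d)) := by
  have : Fact (1 < p ^ d) := ⟨Nat.one_lt_pow hd.ne' hp.one_lt⟩
  refine IsLocalRing.of_nonunits_add fun a b ha hb => ?_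
  obtain ⟨a, rfl⟩ := natCast_zmod_surjective a
  obtain ⟨b, rfl⟩ := natCast_zmod_surjective b
  simp only [mem_nonunits_iff, ← Nat.cast_add, isUnit_natCast_iff_not_dvd_pow hp hd,
    not_not] at ha hb ⊢
  exact dvd_add ha hb

theorem isUnit_two_of_odd {n : ℕ} (hn : Odd n) : IsUnit (2 : ZMod n) := by
  exact_mod_cast (isUnit_iff_coprime 2 n).mpr (Nat.coprime_two_left.mpr hn)

theorem prod_Ico_natCast_eq_prod_univ {M : Type*} [CommMonoid M] {N : ℕ} [NeZero N]
    (f : ZMod N → M) (a : ℕ) : ∏ j ∈ Ico a (a + N), f j = ∏ x : ZMod N, f x := by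
  have hinj : Set.InjOn (Nat.cast : ℕ → ZMod N) (Ico a (a + N)) := by
    intro i hi j hj hij
    simp only [coe_Ico, Set.mem_Ico] at hi hj
    have hmod : i - a ≡ j - a [MOD N] := by
      refine Nat.ModEq.add_left_cancel' a ?_
      rwa [Nat.add_sub_cancel' hi.1, Nat.add_sub_cancel' hj.1, ← natCast_eq_natCast_iff]
    have := hmod.eq_of_lt_of_lt (by omega) (by omega)
    omega
  rw [← prod_image hinj]
  congr
  exact eq_univ_of_card _ (by rw [card_image_of_injOn hinj, ZMod.card]; simp)

end ZMod

theorem natCast_qfact_prime_pow {p t s : ℕ} (hp : p.Prime) (ht : 0 < t) (hs : 0 < s)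
    [DecidablePred (IsUnit : ZMod (p ^ s) → Prop)] (m : ℕ) :
    (qfact (p ^ t) m : ZMod (p ^ s)) =
      ∏ j ∈ Ico 1 (m + 1), if IsUnit (j : ZMod (p ^ s)) then (j : ZMod (p ^ s)) else 1 := by
  rw [qfact, Ico_add_one_right_eq_Icc, prod_filter, Nat.cast_prod]
  refine prod_congr rfl fun j _ => ?_
  have : Nat.gcd (p ^ t) j = 1 ↔ IsUnit (j : ZMod (p ^ s)) := by
    rw [ZMod.isUnit_natCast_iff_not_dvd_pow hp hs, ← hp.coprime_iff_not_dvd,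
      ← Nat.coprime_pow_left_iff ht]
  simp only [this, apply_ite Nat.cast, Nat.cast_one]

theorem pow_dvd_qfact_add (p t s n : ℕ) (hp : p.Prime) (hp3 : 3 ≤ p)
    (ht : 1 ≤ t) (hs : 1 ≤ s) :
    p ^ s ∣ qfact (p ^ t) (n + p ^ s) + qfact (p ^ t) n := by
  classical
  have := ZMod.isLocalRing_prime_pow hp hs
  have : NeZero (p ^ s) := ⟨pow_ne_zero _ hp.ne_zero⟩
  have h2 : IsUnit (2 : ZMod (p ^ s)) :=
    ZMod.isUnit_two_of_odd (hp.odd_of_ne_two (by omega)).pow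
  have hperiod : ∏ j ∈ Ico (n + 1) (n + 1 + p ^ s),
      (if IsUnit (j : ZMod (p ^ s)) then (j : ZMod (p ^ s)) else 1) = -1 :=
    (ZMod.prod_Ico_natCast_eq_prod_univ (fun x => if IsUnit x then x else 1) (n + 1)).trans
      (IsLocalRing.prod_ite_isUnit_eq_neg_one h2)
  rw [← ZMod.natCast_eq_zero_iff, Nat.cast_add, natCast_qfact_prime_pow hp ht hs,
    natCast_qfact_prime_pow hp ht hs, Nat.add_right_comm,
    ← prod_Ico_consecutive _ (by omega : 1 ≤ n + 1) (by omega : n + 1 ≤ n + 1 + p ^ s), hperiod]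
  ring
end

section
/- Let q = 2^t with t ≥ 1, n ∈ ℕ, s ≥ 3. Then 2^s divides (n+2^s)!_q − n!_q; equivalently |(n+2^s)!_q − n!_q|_2 ≤ 2^{-s}. -/
open Finset Function

theorem Function.Periodic.prod_Ico_eq_prod_range {M : Type*} [CommMonoid M] {f : ℕ → M} {a : ℕ}
    (hf : Periodic f a) (n : ℕ) : ∏ i ∈ Ico n (n + a), f i = ∏ i ∈ range a, f i := by
  rw [← Nat.image_Ico_mod n a, prod_image (Nat.mod_injOn_Ico n a)]
  exact prod_congr rfl fun i _ => (hf.map_mod_nat i).symm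

theorem prod_filter_odd_range_two_mul {M : Type*} [CommMonoid M] (f : ℕ → M) (m : ℕ) :
    ∏ j ∈ (range (2 * m)).filter Odd, f j = ∏ i ∈ range m, f (2 * i + 1) := by
  have himage : (range (2 * m)).filter Odd = (range m).image (2 * · + 1) := by
    ext j
    simp only [mem_filter, mem_range, mem_image, Odd]
    constructor
    · rintro ⟨hj, i, rfl⟩
      exact ⟨i, by omega, rfl⟩
    · rintro ⟨i, hi, rfl⟩
      exact ⟨by omega, i, rfl⟩
  rw [himage, prod_image fun i _ k _ h => by simpa using h]

theorem Int.sq_modEq_one_of_modEq_one_two_pow {a : ℤ} {k : ℕ} (hk : k ≠ 0)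
    (h : a ≡ 1 [ZMOD 2 ^ k]) : a ^ 2 ≡ 1 [ZMOD 2 ^ (k + 1)] := by
  rw [Int.modEq_iff_dvd] at h ⊢
  have hsucc : (2 : ℤ) ∣ 1 + a := by
    rw [show 1 + a = 2 - (1 - a) by ring]
    exact (dvd_refl 2).sub ((dvd_pow_self 2 hk).trans h)
  rw [pow_succ, show 1 - a ^ 2 = (1 - a) * (1 + a) by ring]
  exact mul_dvd_mul h hsucc

theorem prod_odd_range_two_mul_modEq (m : ℕ) :
    ∏ i ∈ range (2 * m), (2 * i + 1 : ℤ) ≡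
      (-1) ^ m * (∏ i ∈ range m, (2 * i + 1 : ℤ)) ^ 2 [ZMOD 4 * m] := by
  have hmod := ZMod.intCast_eq_intCast_iff (∏ i ∈ range (2 * m), (2 * i + 1 : ℤ))
    ((-1) ^ m * (∏ i ∈ range m, (2 * i + 1 : ℤ)) ^ 2) (4 * m)
  push_cast at hmod
  rw [← hmod, two_mul, prod_range_add]
  -- `2 (m + (m - 1 - i)) + 1` is `4 m - (2 i + 1)`: the upper half reflects onto the lower one.
  have hreflect : ∀ i ∈ range m,
      2 * ((m + (m - 1 - i) : ℕ) : ZMod (4 * m)) + 1 = -(2 * i + 1) := by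
    intro i hi
    rw [eq_neg_iff_add_eq_zero]
    have hsum : 2 * (m + (m - 1 - i)) + 1 + (2 * i + 1) = 4 * m := by
      have := mem_range.mp hi
      omega
    exact_mod_cast (congrArg (Nat.cast : ℕ → ZMod (4 * m)) hsum).trans (ZMod.natCast_self _)
  rw [← prod_range_reflect (fun i => 2 * ((m + i : ℕ) : ZMod (4 * m)) + 1) m,
    prod_congr rfl hreflect, prod_neg, card_range]
  ring

theorem prod_odd_range_two_pow_modEq_one {k : ℕ} (hk : 2 ≤ k) :
    ∏ i ∈ range (2 ^ k), (2 * i + 1 : ℤ) ≡ 1 [ZMOD 2 ^ (k + 1)] := by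
  induction k, hk using Nat.le_induction with
  | base => decide
  | succ k hk ih =>
    have hdouble := prod_odd_range_two_mul_modEq (2 ^ k)
    rw [(Nat.even_pow.mpr ⟨even_two, by omega⟩).neg_one_pow, one_mul, ← pow_succ'] at hdouble
    push_cast at hdouble
    rw [show (4 : ℤ) * 2 ^ k = 2 ^ (k + 2) by ring] at hdouble
    exact hdouble.trans (Int.sq_modEq_one_of_modEq_one_two_pow (by omega) ih)

theorem prod_filter_coprime_range_two_pow {s : ℕ} (hs : 3 ≤ s) :
    ∏ j ∈ (range (2 ^ s)).filter (Nat.Coprime (2 ^ s)), (j : ZMod (2 ^ s)) = 1 := by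
  obtain ⟨k, rfl⟩ : ∃ k, s = k + 1 := ⟨s - 1, by omega⟩
  have hodd : (range (2 ^ (k + 1))).filter (Nat.Coprime (2 ^ (k + 1))) =
      (range (2 * 2 ^ k)).filter Odd := by
    rw [← pow_succ']
    exact filter_congr fun j _ =>
      (Nat.coprime_pow_left_iff k.succ_pos 2 j).trans Nat.coprime_two_left
  have h := (ZMod.intCast_eq_intCast_iff _ 1 (2 ^ (k + 1))).mpr
    (prod_odd_range_two_pow_modEq_one (k := k) (by omega))
  push_cast at h
  rw [hodd, prod_filter_odd_range_two_mul]
  exact_mod_cast h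

theorem prod_filter_coprime_Ioc_add_self (q n : ℕ) :
    ∏ j ∈ (Ioc n (n + q)).filter (Nat.Coprime q), (j : ZMod q) =
      ∏ j ∈ (range q).filter (Nat.Coprime q), (j : ZMod q) := by
  have hper : Periodic (fun j => if Nat.Coprime q j then (j : ZMod q) else 1) q := fun j => by
    simp [Nat.coprime_add_self_right]
  rw [prod_filter, prod_filter, ← Ico_add_one_add_one_eq_Ioc, add_right_comm,
    hper.prod_Ico_eq_prod_range]

theorem qfact_add (q n m : ℕ) :
    qfact q (n + m) = qfact q n * ∏ j ∈ (Ioc n (n + m)).filter (Nat.Coprime q), j := by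
  have hIcc (k : ℕ) : Icc 1 k = Ioc 0 k := Icc_add_one_left_eq_Ioc 0 k
  simp only [qfact, Nat.Coprime, hIcc, prod_filter]
  exact (prod_Ioc_consecutive _ (Nat.zero_le n) (Nat.le_add_right n m)).symm

theorem qfact_two_pow {t : ℕ} (ht : t ≠ 0) : qfact (2 ^ t) = qfact 2 := by
  funext n
  unfold qfact
  congr! 2 with j
  exact Nat.coprime_pow_left_iff (Nat.pos_of_ne_zero ht) 2 j

theorem pow_dvd_qfact_sub_two (t s n : ℕ) (ht : 1 ≤ t) (hs : 3 ≤ s) :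
    (2 : ℤ) ^ s ∣ (qfact (2 ^ t) (n + 2 ^ s) : ℤ) - qfact (2 ^ t) n := by
  have hq : qfact (2 ^ t) = qfact (2 ^ s) := by
    rw [qfact_two_pow (by omega), qfact_two_pow (by omega)]
  have hmod := ZMod.intCast_zmod_eq_zero_iff_dvd
    ((qfact (2 ^ t) (n + 2 ^ s) : ℤ) - qfact (2 ^ t) n) (2 ^ s)
  push_cast at hmod
  rw [← hmod, hq, qfact_add]
  push_cast
  rw [prod_filter_coprime_Ioc_add_self, prod_filter_coprime_range_two_pow hs, mul_one, sub_self]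
end

section
/- Let p be prime, n ≥ 1 with p-adic expansion n = ∑_{i=0}^{ℓ} n_i p^i (n_ℓ ≠ 0) and digit sum S_n = ∑_{i=0}^{ℓ} n_i. Then n! = (-1)^{n+1-ℓ} · (-p)^{(n - S_n)/(p-1)} · ∏_{i=0}^{ℓ} Γ_p(⌊n/p^i⌋ + 1). -/
/-!
Removing the multiples of `p` from `m!` leaves the `p`-free part `(m!)_p`, while the multiples
contribute `p ^ (m / p) * (m / p)!`. Iterating on `m / p`, `m / p ^ 2`, … until the quotient
vanishes writes `n!` as `∏ᵢ (⌊n / pⁱ⌋!)_p` times `p` to the power `∑ᵢ ⌊n / pⁱ⁺¹⌋`, which is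
Legendre's `(n - S_n) / (p - 1)`. Finally `(m!)_p = (-1)^(m+1) Γ_p(m + 1)`, and the signs
collect to `(-1)^(n + 1 + ℓ + (n - S_n) / (p - 1))`.
-/

/-- Morita's `p`-adic gamma function on positive integers:
`Γ_p(m) = (-1)^m ∏_{j=1, p∤j}^{m-1} j`, as an integer. -/
def moritaGamma (p n : ℕ) : ℤ :=
  (-1) ^ n * ∏ j ∈ (Finset.range n).filter (fun j => ¬ p ∣ j), (j : ℤ)

open Finset Nat

/-- `(m!)_p`; the index `0 ∈ range (m + 1)` drops out because `p ∣ 0`. -/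
def primeToFactorial (p m : ℕ) : ℕ :=
  ∏ j ∈ (range (m + 1)).filter (fun j => ¬ p ∣ j), j

theorem primeToFactorial_succ (p m : ℕ) :
    primeToFactorial p (m + 1) = primeToFactorial p m * if p ∣ m + 1 then 1 else m + 1 := by
  simp only [primeToFactorial, prod_filter, prod_range_succ (n := m + 1), ite_not]

theorem factorial_eq_primeToFactorial_mul (p m : ℕ) :
    m ! = primeToFactorial p m * p ^ (m / p) * (m / p)! := by
  induction m with
  | zero => simp [primeToFactorial, filter_singleton]
  | succ m ih =>
    rw [factorial_succ, ih, primeToFactorial_succ]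
    by_cases hdvd : p ∣ m + 1
    · have hm : m + 1 = p * (m / p + 1) := by
        rw [← succ_div_of_dvd hdvd, Nat.mul_div_cancel' hdvd]
      rw [if_pos hdvd, succ_div_of_dvd hdvd, factorial_succ, pow_succ, hm]
      ring
    · rw [if_neg hdvd, succ_div_of_not_dvd hdvd]
      ring

theorem factorial_eq_prod_primeToFactorial_mul (p n k : ℕ) :
    n ! = (∏ i ∈ range k, primeToFactorial p (n / p ^ i))
      * p ^ (∑ i ∈ range k, n / p ^ (i + 1)) * (n / p ^ k)! := by
  induction k with
  | zero => simp
  | succ k ih =>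
    rw [ih, factorial_eq_primeToFactorial_mul p (n / p ^ k), Nat.div_div_eq_div_mul,
      ← pow_succ, prod_range_succ, sum_range_succ, pow_add]
    ring

theorem sum_range_succ_log_div_pow_succ {p : ℕ} (hp : 1 < p) (n : ℕ) :
    ∑ i ∈ range (log p n + 1), n / p ^ (i + 1) = (n - (digits p n).sum) / (p - 1) := by
  rw [← sub_one_mul_sum_log_div_pow_eq_sub_sum_digits,
    Nat.mul_div_cancel_left _ (Nat.sub_pos_of_lt hp)]

theorem div_pow_eq_zero_of_log_lt {p : ℕ} (hp : 1 < p) {n k : ℕ} (hk : log p n < k) :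
    n / p ^ k = 0 :=
  Nat.div_eq_of_lt (lt_pow_of_log_lt hp hk)

theorem factorial_eq_prod_primeToFactorial {p : ℕ} (hp : 1 < p) (n : ℕ) :
    n ! = (∏ i ∈ range (log p n + 1), primeToFactorial p (n / p ^ i))
      * p ^ ((n - (digits p n).sum) / (p - 1)) := by
  rw [factorial_eq_prod_primeToFactorial_mul p n (log p n + 1),
    div_pow_eq_zero_of_log_lt hp (lt_add_one _), sum_range_succ_log_div_pow_succ hp,
    factorial_zero, mul_one]

theorem sum_range_succ_log_div_pow {p : ℕ} (hp : 1 < p) (n : ℕ) :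
    ∑ i ∈ range (log p n + 1), n / p ^ i = n + (n - (digits p n).sum) / (p - 1) := by
  rw [← sum_range_succ_log_div_pow_succ hp, sum_range_succ', sum_range_succ,
    div_pow_eq_zero_of_log_lt hp (lt_add_one _)]
  simp [add_comm]

theorem primeToFactorial_eq_neg_one_pow_mul_moritaGamma (p m : ℕ) :
    (primeToFactorial p m : ℤ) = (-1) ^ (m + 1) * moritaGamma p (m + 1) := by
  rw [moritaGamma, ← mul_assoc, ← pow_add, Even.neg_one_pow ⟨m + 1, rfl⟩, one_mul,
    primeToFactorial, Nat.cast_prod]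

theorem neg_one_pow_sub_eq_neg_one_pow_add {R : Type*} [Monoid R] [HasDistribNeg R] {a b : ℕ}
    (h : b ≤ a) : (-1 : R) ^ (a - b) = (-1) ^ (a + b) := by
  rw [show a + b = a - b + 2 * b by omega, pow_add, pow_mul, neg_one_sq, one_pow, mul_one]

theorem factorial_eq_prod_moritaGamma_general (p n : ℕ) (hp : p.Prime) :
    (n.factorial : ℤ)
      = (-1) ^ (n + 1 - Nat.log p n)
          * (-(p : ℤ)) ^ ((n - (Nat.digits p n).sum) / (p - 1))
          * ∏ i ∈ Finset.range (Nat.log p n + 1), moritaGamma p (n / p ^ i + 1) := by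
  have hsign : ∏ i ∈ range (log p n + 1), (-1 : ℤ) ^ (n / p ^ i + 1)
      = (-1) ^ (n + 1 - log p n) * (-1) ^ ((n - (digits p n).sum) / (p - 1)) := by
    rw [prod_pow_eq_pow_sum, sum_add_distrib, sum_range_succ_log_div_pow hp.one_lt,
      neg_one_pow_sub_eq_neg_one_pow_add (le_add_right (Nat.log_le_self p n)), ← pow_add]
    simp only [sum_const, card_range, smul_eq_mul, mul_one]
    ring
  rw [factorial_eq_prod_primeToFactorial hp.one_lt, Nat.cast_mul, Nat.cast_prod, Nat.cast_pow]
  simp only [primeToFactorial_eq_neg_one_pow_mul_moritaGamma, prod_mul_distrib, hsign,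
    neg_pow (p : ℤ)]
  ring

theorem factorial_eq_prod_moritaGamma (p n : ℕ) (hp : p.Prime) (hn : 1 ≤ n) :
    (n.factorial : ℤ)
      = (-1) ^ (n + 1 - Nat.log p n)
          * (-(p : ℤ)) ^ ((n - (Nat.digits p n).sum) / (p - 1))
          * ∏ i ∈ Finset.range (Nat.log p n + 1), moritaGamma p (n / p ^ i + 1) :=
  factorial_eq_prod_moritaGamma_general p n hp
end
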